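/- Let λ be an e-restricted partition with beta-number set J of charge m, and suppose U(J) ≠ ∅. Define down(J) by letting p' = min U(J), W(J) = {x > p' - e : x ∈ J, x + e ∉ J} ∪ {p'}, q' = min W(J), and down(J) = (J \ {q'}) ∪ {p' - e}. Then the partition down(λ) corresponding to down(J) satisfies down(λ) ⊆ λ. -/

import Mathlib

/-- A partition: a weakly decreasing, eventually zero sequence of naturals. -/
structure SeqPartition where
  parts : ℕ → ℕ
  antitone : ∀ k, parts (k + 1) ≤ parts k
  eventually_zero : ∃ N, ∀ k, N ≤ k → parts k = 0

/-- A partition is `e`-restricted if consecutive parts differ by less than `e`. -/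
def eRestricted (e : ℕ) (l : SeqPartition) : Prop :=
  ∀ k, l.parts k < l.parts (k + 1) + e

/-- The set of beta numbers of charge `m` of a partition. -/
def betaSet (l : SeqPartition) (m : ℤ) : Set ℤ :=
  {x | ∃ k : ℕ, x = (l.parts k : ℤ) + m - k}

/-- `U(J)`: the beads that can be slid up by one on their runner. -/
def USet (e : ℕ) (J : Set ℤ) : Set ℤ :=
  {x | x ∈ J ∧ x - (e : ℤ) ∉ J}

lemma beta_strictAnti (l : SeqPartition) (m : ℤ) :
    StrictAnti (fun k : ℕ => (l.parts k : ℤ) + m - k) := by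
  apply strictAnti_nat_of_succ_lt
  intro n
  have := l.antitone n
  push_cast
  omega

/-- Lemma 2.6(1): the `down` operation shrinks the partition:
if `p'` is the least element of `U(J)`,
`q' = min ({x > p' - e : x ∈ J, x + e ∉ J} ∪ {p'})`, and `down(λ)` has beta set
`(J \ {q'}) ∪ {p' - e}`, then `down(λ) ⊆ λ`. -/
theorem down_contained (e : ℕ) (he : 2 ≤ e) (m : ℤ)
    (lam mu : SeqPartition) (hres : eRestricted e lam)
    (p' q' : ℤ)
    (hp : IsLeast (USet e (betaSet lam m)) p')
    (hq : IsLeast ({x : ℤ | p' - (e : ℤ) < x ∧ x ∈ betaSet lam m ∧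
      x + (e : ℤ) ∉ betaSet lam m} ∪ {p'}) q')
    (hmu : betaSet mu m = (betaSet lam m \ {q'}) ∪ {p' - (e : ℤ)}) :
    ∀ k, mu.parts k ≤ lam.parts k := by
  intro k
  by_contra hlt
  push_neg at hlt
  set a : ℕ → ℤ := fun j => (lam.parts j : ℤ) + m - j with ha
  set b : ℕ → ℤ := fun j => (mu.parts j : ℤ) + m - j with hb
  have haA : StrictAnti a := beta_strictAnti lam m
  have hbA : StrictAnti b := beta_strictAnti mu m
  have hak_bk : a k < b k := by
    simp only [ha, hb]
    have : (lam.parts k : ℤ) < (mu.parts k : ℤ) := by exact_mod_cast hlt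
    omega
  have hmemJ : ∀ x, x ∈ betaSet lam m ↔ ∃ j : ℕ, x = a j := fun x => Iff.rfl
  have hq'J : q' ∈ betaSet lam m := by
    rcases hq.1 with h | h
    · exact h.2.1
    · simp only [Set.mem_singleton_iff] at h; subst h; exact hp.1.1
  have hq'gt : p' - (e : ℤ) < q' := by
    rcases hq.1 with h | h
    · exact h.1
    · simp only [Set.mem_singleton_iff] at h; subst h
      have : (2 : ℤ) ≤ (e : ℤ) := by exact_mod_cast he
      omega
  have hpe_notJ : p' - (e : ℤ) ∉ betaSet lam m := hp.1.2
  -- elements of J above a k are a j for j < k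
  have habove : ∀ x, x ∈ betaSet lam m → a k < x → ∃ j < k, x = a j := by
    intro x hx hgt
    obtain ⟨j, rfl⟩ := (hmemJ x).1 hx
    refine ⟨j, ?_, rfl⟩
    by_contra hjk
    push_neg at hjk
    exact absurd (haA.antitone hjk) (by omega)
  have hbJ' : ∀ i, b i ∈ (betaSet lam m \ {q'}) ∪ {p' - (e : ℤ)} := by
    intro i
    rw [← hmu]
    exact ⟨i, rfl⟩
  have hbgt : ∀ i ≤ k, a k < b i := fun i hi =>
    lt_of_lt_of_le hak_bk (hbA.antitone hi)
  set T : Finset ℤ := (Finset.range k).image a with hT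
  have hTcard : T.card ≤ k := le_trans Finset.card_image_le (by simp)
  have hinj : Set.InjOn b ↑(Finset.range (k + 1)) := hbA.injective.injOn
  by_cases hcase : p' - (e : ℤ) ≤ a k
  · -- p' - e ≤ a k : all b i land in T
    have hsub : ∀ i ∈ Finset.range (k + 1), b i ∈ T := by
      intro i hi
      simp only [Finset.mem_range] at hi
      have hgt := hbgt i (by omega)
      rcases hbJ' i with ⟨hJ, _⟩ | hpe
      · obtain ⟨j, hj, hje⟩ := habove _ hJ hgt
        exact Finset.mem_image.2 ⟨j, Finset.mem_range.2 hj, hje.symm⟩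
      · simp only [Set.mem_singleton_iff] at hpe
        omega
    have := Finset.card_le_card_of_injOn b hsub hinj
    simp only [Finset.card_range] at this
    omega
  · push_neg at hcase
    obtain ⟨j, hj, hje⟩ := habove q' hq'J (by omega)
    have hq'T : q' ∈ T := Finset.mem_image.2 ⟨j, Finset.mem_range.2 hj, hje.symm⟩
    set T' : Finset ℤ := insert (p' - (e : ℤ)) (T.erase q') with hT'
    have hT'card : T'.card ≤ k := by
      have h1 : T'.card ≤ (T.erase q').card + 1 := Finset.card_insert_le _ _
      have h2 := Finset.card_erase_of_mem hq'T
      have h3 : 1 ≤ T.card := Finset.card_pos.2 ⟨q', hq'T⟩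
      omega
    have hsub : ∀ i ∈ Finset.range (k + 1), b i ∈ T' := by
      intro i hi
      simp only [Finset.mem_range] at hi
      have hgt := hbgt i (by omega)
      rcases hbJ' i with ⟨hJ, hne⟩ | hpe
      · simp only [Set.mem_singleton_iff] at hne
        obtain ⟨j', hj', hje'⟩ := habove _ hJ hgt
        exact Finset.mem_insert.2 (Or.inr (Finset.mem_erase.2
          ⟨hne, Finset.mem_image.2 ⟨j', Finset.mem_range.2 hj', hje'.symm⟩⟩))
      · simp only [Set.mem_singleton_iff] at hpe
        exact Finset.mem_insert.2 (Or.inl hpe)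
    have := Finset.card_le_card_of_injOn b hsub hinj
    simp only [Finset.card_range] at this
    omega
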